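/- arXiv:2409.14861 — 4 statements merged into one kernel-verified Lean document; each statement's English description precedes it below -/
import Mathlib

section
/- Let (X, d) be a metric space equipped with a convex space structure (a binary operation p·x + (1−p)·y for p ∈ [0,1] satisfying the convex space axioms). Then the following two conditions are equivalent: (1) for all x₁, x₂, y₁, y₂ ∈ X and all p ∈ [0,1], d(p·x₁ + (1−p)·x₂, p·y₁ + (1−p)·y₂) ≤ p·d(x₁,y₁) + (1−p)·d(x₂,y₂); (2) for all x, y, z ∈ X and all p ∈ [0,1], d(p·x + (1−p)·z, p·y + (1−p)·z) ≤ p·d(x,y). -/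
/-- For a metric space with a convex space structure, the
Wasserstein-barycentric inequality (1) is equivalent to the compatibility
condition (2). -/
theorem stmt0 {X : Type*} [MetricSpace X] (c : ℝ → X → X → X)
    (h_one : ∀ x y, c 1 x y = x)
    (h_idem : ∀ p x, p ∈ Set.Icc (0:ℝ) 1 → c p x x = x)
    (h_comm : ∀ p x y, p ∈ Set.Icc (0:ℝ) 1 → c p x y = c (1 - p) y x)
    (h_assoc : ∀ p q x y z, p ∈ Set.Icc (0:ℝ) 1 → q ∈ Set.Icc (0:ℝ) 1 →
      p * q ≠ 1 → c p (c q x y) z = c (p * q) x (c (p * (1 - q) / (1 - p * q)) y z)) :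
    (∀ x₁ x₂ y₁ y₂ : X, ∀ p ∈ Set.Icc (0:ℝ) 1,
        dist (c p x₁ x₂) (c p y₁ y₂) ≤ p * dist x₁ y₁ + (1 - p) * dist x₂ y₂) ↔
    (∀ x y z : X, ∀ p ∈ Set.Icc (0:ℝ) 1,
        dist (c p x z) (c p y z) ≤ p * dist x y) := by
  constructor
  · intro h1 x y z p hp
    have := h1 x z y z p hp
    simpa using this
  · intro h2 x₁ x₂ y₁ y₂ p hp
    obtain ⟨hp0, hp1⟩ := hp
    have hp' : 1 - p ∈ Set.Icc (0:ℝ) 1 := ⟨by linarith, by linarith⟩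
    have A : dist (c p x₁ x₂) (c p y₁ x₂) ≤ p * dist x₁ y₁ := h2 x₁ y₁ x₂ p ⟨hp0, hp1⟩
    have B : dist (c p y₁ x₂) (c p y₁ y₂) ≤ (1 - p) * dist x₂ y₂ := by
      rw [h_comm p y₁ x₂ ⟨hp0, hp1⟩, h_comm p y₁ y₂ ⟨hp0, hp1⟩]
      exact h2 x₂ y₂ y₁ (1 - p) hp'
    calc dist (c p x₁ x₂) (c p y₁ y₂)
        ≤ dist (c p x₁ x₂) (c p y₁ x₂) + dist (c p y₁ x₂) (c p y₁ y₂) := dist_triangle _ _ _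
      _ ≤ p * dist x₁ y₁ + (1 - p) * dist x₂ y₂ := add_le_add A B
end

section
/- Let ℕ carry the discrete topology and the convex structure p·i + (1−p)·j = min(i,j) for p ∈ (0,1). Then the map ε : G ℕ → ℕ sending a probability measure P = ∑_i p_i δ_i to min{ i ∈ ℕ | p_i > 0 } (the minimum of the support of P) is well-defined and is countably affine: ε(∑_{k∈ℕ} q_k P_k) = min over k with q_k > 0 of ε(P_k). -/
/-! The support of the mixture `∑ₖ qₖ Pₖ` is the union of the supports of the `Pₖ` with
`qₖ ≠ 0`, because a countable sum in `ℝ≥0∞` vanishes only if every term does; and on `ℕ` the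
minimum of a union of nonempty sets is the minimum of their minima. -/

open MeasureTheory ENNReal

/-- The expectation map on probability measures on `ℕ` (with the convex
structure `p·i + (1−p)·j = min i j`): it sends `P` to the minimum of its
support. -/
noncomputable def epsNat (P : @Measure ℕ ⊤) : ℕ := sInf {i : ℕ | P {i} ≠ 0}

theorem MeasureTheory.Measure.exists_measure_singleton_ne_zero {α : Type*} [Countable α]
    [MeasurableSpace α] (μ : Measure α) [NeZero μ] : ∃ x, μ {x} ≠ 0 := by
  by_contra! h
  have : NullSingletonClass μ := ⟨h⟩
  exact NeZero.ne μ (measure_univ_eq_zero.mp (Set.countable_univ.measure_zero μ))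

theorem MeasureTheory.Measure.sum_smul_apply_ne_zero_iff {α ι : Type*} [MeasurableSpace α]
    {q : ι → ℝ≥0∞} {μ : ι → Measure α} {s : Set α} (hs : MeasurableSet s) :
    Measure.sum (fun k => q k • μ k) s ≠ 0 ↔ ∃ k, q k ≠ 0 ∧ μ k s ≠ 0 := by
  rw [Measure.sum_apply _ hs]
  simp [ENNReal.tsum_eq_zero]

theorem Nat.sInf_biUnion {ι : Type*} {K : Set ι} {S : ι → Set ℕ}
    (hS : ∀ k ∈ K, (S k).Nonempty) :
    sInf (⋃ k ∈ K, S k) = sInf ((fun k => sInf (S k)) '' K) := by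
  rcases K.eq_empty_or_nonempty with rfl | hK
  · simp
  apply le_antisymm
  · obtain ⟨k, hk, hmin⟩ := Nat.sInf_mem (hK.image fun k => sInf (S k))
    rw [← hmin]
    exact Nat.sInf_le (Set.mem_biUnion hk (Nat.sInf_mem (hS k hk)))
  · obtain ⟨k, hk, hi⟩ := Set.mem_iUnion₂.mp
      (Nat.sInf_mem (Set.nonempty_biUnion.mpr (hK.elim fun k hk => ⟨k, hk, hS k hk⟩)))
    exact (Nat.sInf_le (Set.mem_image_of_mem _ hk)).trans (Nat.sInf_le hi)

/-- The map `ε : G ℕ → ℕ`, `P ↦ min{ i | P {i} > 0 }`, is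
well-defined (the support is nonempty) and countably affine:
`ε (∑ₖ q k • P k) = min { ε (P k) | q k > 0 }`. -/
theorem stmt7 (q : ℕ → ℝ≥0∞) (hq : ∑' k, q k = 1)
    (P : ℕ → @Measure ℕ ⊤) (hP : ∀ k, @IsProbabilityMeasure ℕ ⊤ (P k)) :
    (∀ k, {i : ℕ | P k {i} ≠ 0}.Nonempty) ∧
    {i : ℕ | (@Measure.sum ℕ ℕ ⊤ fun k => q k • P k) {i} ≠ 0}.Nonempty ∧
    epsNat (@Measure.sum ℕ ℕ ⊤ fun k => q k • P k) =
      sInf ((fun k => epsNat (P k)) '' {k : ℕ | q k ≠ 0}) := by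
  have hsupp (k : ℕ) : {i : ℕ | P k {i} ≠ 0}.Nonempty :=
    have := hP k
    Measure.exists_measure_singleton_ne_zero (P k)
  have hmix : {i : ℕ | (@Measure.sum ℕ ℕ ⊤ fun k => q k • P k) {i} ≠ 0} =
      ⋃ k ∈ {k : ℕ | q k ≠ 0}, {i : ℕ | P k {i} ≠ 0} := by
    ext i
    simp only [Set.mem_ofPred_eq, Set.mem_iUnion, exists_prop]
    exact Measure.sum_smul_apply_ne_zero_iff MeasurableSpace.measurableSet_top
  obtain ⟨k₀, hk₀⟩ : ∃ k, q k ≠ 0 := by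
    by_contra! h
    simp [h] at hq
  refine ⟨hsupp, ?_, ?_⟩
  · rw [hmix]
    exact Set.nonempty_biUnion.mpr ⟨k₀, hk₀, hsupp k₀⟩
  · rw [epsNat, hmix]
    exact Nat.sInf_biUnion fun k _ => hsupp k
end

section
/- Every discrete-type convex space X carries a partial order defined by y ≤ x iff p·y + (1−p)·x = x for all p ∈ (0,1). Verify this relation is reflexive, antisymmetric, and transitive. -/
/-! Reflexivity is idempotence and antisymmetry is commutativity at weight `1/2`. For transitivity
write `p = P * Q` with `P = (1 + p) / 2` and `Q = 2p / (1 + p)`: associativity rewrites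
`P·(Q·z + (1-Q)·y) + (1-P)·x` as `p·z + (1-p)·(½·y + ½·x)`, and both sides collapse to `x`. -/

open Set

namespace ConvexCombination

variable {X : Type*} (c : ℝ → X → X → X)

/-- `y ≤ x` in the order of a convex space whose combination `p·a + (1-p)·b` is `c p a b`. -/
def LE (y x : X) : Prop := ∀ p ∈ Ioo (0:ℝ) 1, c p y x = x

variable {c}

lemma le_refl (h_idem : ∀ p x, p ∈ Icc (0:ℝ) 1 → c p x x = x) (x : X) : LE c x x :=
  fun p hp => h_idem p x (Ioo_subset_Icc_self hp)

lemma le_antisymm (h_comm : ∀ p x y, p ∈ Icc (0:ℝ) 1 → c p x y = c (1 - p) y x) {x y : X}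
    (hyx : LE c y x) (hxy : LE c x y) : x = y := by
  have half : (1/2 : ℝ) ∈ Ioo 0 1 := ⟨by norm_num, by norm_num⟩
  calc x = c (1/2) y x := (hyx _ half).symm
    _ = c (1 - 1/2) x y := h_comm _ _ _ (Ioo_subset_Icc_self half)
    _ = y := by norm_num [hxy _ half]

lemma mul_eq_and_assoc_weight_eq_half {p : ℝ} (hp : p ∈ Ioo (0:ℝ) 1) :
    (p + 1) / 2 * (2 * p / (p + 1)) = p ∧
      (p + 1) / 2 * (1 - 2 * p / (p + 1)) / (1 - (p + 1) / 2 * (2 * p / (p + 1))) = 1 / 2 := by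
  have hp1 : p + 1 ≠ 0 := by linarith [hp.1]
  have hmul : (p + 1) / 2 * (2 * p / (p + 1)) = p := by field_simp
  refine ⟨hmul, ?_⟩
  have h1p : 1 - p ≠ 0 := by linarith [hp.2]
  rw [hmul]
  field_simp
  ring

lemma le_trans (h_assoc : ∀ p q x y z, p ∈ Icc (0:ℝ) 1 → q ∈ Icc (0:ℝ) 1 →
      p * q ≠ 1 → c p (c q x y) z = c (p * q) x (c (p * (1 - q) / (1 - p * q)) y z))
    {x y z : X} (hzy : LE c z y) (hyx : LE c y x) : LE c z x := by
  intro p hp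
  obtain ⟨hp0, hp1⟩ := hp
  have hP : (p + 1) / 2 ∈ Ioo (0:ℝ) 1 := ⟨by linarith, by linarith⟩
  have hQ : 2 * p / (p + 1) ∈ Ioo (0:ℝ) 1 :=
    ⟨by positivity, by rw [div_lt_one (by linarith)]; linarith⟩
  obtain ⟨hmul, hhalf⟩ := mul_eq_and_assoc_weight_eq_half ⟨hp0, hp1⟩
  have key := h_assoc _ _ z y x (Ioo_subset_Icc_self hP) (Ioo_subset_Icc_self hQ)
    (by rw [hmul]; exact hp1.ne)
  rw [hzy _ hQ, hyx _ hP, hhalf, hmul, hyx _ ⟨by norm_num, by norm_num⟩] at key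
  exact key.symm

end ConvexCombination

theorem stmt13_general {X : Type*} (c : ℝ → X → X → X)
    (h_idem : ∀ p x, p ∈ Set.Icc (0:ℝ) 1 → c p x x = x)
    (h_comm : ∀ p x y, p ∈ Set.Icc (0:ℝ) 1 → c p x y = c (1 - p) y x)
    (h_assoc : ∀ p q x y z, p ∈ Set.Icc (0:ℝ) 1 → q ∈ Set.Icc (0:ℝ) 1 →
      p * q ≠ 1 → c p (c q x y) z = c (p * q) x (c (p * (1 - q) / (1 - p * q)) y z)) :
    (∀ x : X, ∀ p ∈ Set.Ioo (0:ℝ) 1, c p x x = x) ∧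
    (∀ x y : X, (∀ p ∈ Set.Ioo (0:ℝ) 1, c p y x = x) →
      (∀ p ∈ Set.Ioo (0:ℝ) 1, c p x y = y) → x = y) ∧
    (∀ x y z : X, (∀ p ∈ Set.Ioo (0:ℝ) 1, c p z y = y) →
      (∀ p ∈ Set.Ioo (0:ℝ) 1, c p y x = x) →
      (∀ p ∈ Set.Ioo (0:ℝ) 1, c p z x = x)) :=
  ⟨ConvexCombination.le_refl h_idem, fun _ _ => ConvexCombination.le_antisymm h_comm,
    fun _ _ _ => ConvexCombination.le_trans h_assoc⟩

/-- On a discrete-type convex space, the relation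
`y ≤ x ↔ ∀ p ∈ (0,1), p·y + (1−p)·x = x` is reflexive, antisymmetric and
transitive. -/
theorem stmt13 {X : Type*} (c : ℝ → X → X → X)
    (h_one : ∀ x y, c 1 x y = x)
    (h_idem : ∀ p x, p ∈ Set.Icc (0:ℝ) 1 → c p x x = x)
    (h_comm : ∀ p x y, p ∈ Set.Icc (0:ℝ) 1 → c p x y = c (1 - p) y x)
    (h_assoc : ∀ p q x y z, p ∈ Set.Icc (0:ℝ) 1 → q ∈ Set.Icc (0:ℝ) 1 →
      p * q ≠ 1 → c p (c q x y) z = c (p * q) x (c (p * (1 - q) / (1 - p * q)) y z))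
    (h_disc : ∀ x y : X, ∃ z : X, ∀ p ∈ Set.Ioo (0:ℝ) 1, c p x y = z) :
    (∀ x : X, ∀ p ∈ Set.Ioo (0:ℝ) 1, c p x x = x) ∧
    (∀ x y : X, (∀ p ∈ Set.Ioo (0:ℝ) 1, c p y x = x) →
      (∀ p ∈ Set.Ioo (0:ℝ) 1, c p x y = y) → x = y) ∧
    (∀ x y z : X, (∀ p ∈ Set.Ioo (0:ℝ) 1, c p z y = y) →
      (∀ p ∈ Set.Ioo (0:ℝ) 1, c p y x = x) →
      (∀ p ∈ Set.Ioo (0:ℝ) 1, c p z x = x)) :=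
  stmt13_general c h_idem h_comm h_assoc
end

section
/- Let X be a standard Borel space carrying a convex space structure induced by a G-algebra h : G X → X (i.e., ∑_{i} p_i x_i := h(∑_i p_i δ_{x_i})). Then h is affine with respect to this structure: h(∑_{i=1}^n p_i P_i) = ∑_{i=1}^n p_i h(P_i) for all probability measures P_i on X and weights p_i with ∑ p_i = 1. -/
open MeasureTheory ENNReal

/-- If `h : G X → X` is a `G`-algebra on a standard Borel space
`X` (measurable, `h(δ_x) = x`, and `h ∘ μ_X = h ∘ G h`), then `h` is affine
with respect to the induced convex structure `∑ pᵢ xᵢ := h(∑ pᵢ δ_{xᵢ})`: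
`h(∑ᵢ pᵢ Pᵢ) = h(∑ᵢ pᵢ δ_{h(Pᵢ)})` for finite convex combinations of
probability measures. -/
theorem stmt16 {X : Type*} [MeasurableSpace X] [StandardBorelSpace X]
    (h : Measure X → X) (hmeas : Measurable h)
    (hdirac : ∀ x : X, h (Measure.dirac x) = x)
    (halg : ∀ Q : Measure (Measure X), IsProbabilityMeasure Q →
      h Q.join = h (Q.map h))
    (n : ℕ) (p : Fin n → ℝ≥0∞) (hp : ∑ i, p i = 1)
    (P : Fin n → Measure X) (hP : ∀ i, IsProbabilityMeasure (P i)) :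
    h (∑ i, p i • P i) = h (∑ i, p i • Measure.dirac (h (P i))) := by
  set Q : Measure (Measure X) := ∑ i, p i • Measure.dirac (P i) with hQ
  have hQprob : IsProbabilityMeasure Q := by
    constructor
    simp [hQ, Measure.smul_apply, smul_eq_mul, hp]
  have hjoin : Q.join = ∑ i, p i • P i := by
    ext s hs
    rw [Measure.join_apply hs]
    simp [hQ, lintegral_finset_sum_measure, lintegral_smul_measure,
      lintegral_dirac' _ (Measure.measurable_coe hs), Measure.finset_sum_apply,
      Measure.smul_apply, smul_eq_mul]
  have hmap : Q.map h = ∑ i, p i • Measure.dirac (h (P i)) := by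
    ext s hs
    rw [Measure.map_apply hmeas hs]
    simp [hQ, Measure.finset_sum_apply, Measure.smul_apply,
      Measure.dirac_apply' _ (hmeas hs)]
    refine Finset.sum_congr rfl fun x _ => ?_
    congr 1
  rw [← hjoin, halg Q hQprob, hmap]
end
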